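/- (Theorem 1, Case (c)) Let p ∈ (0,1], let Δ be an admissible kernel, and let π be a κ-greedy policy. Then v_π k s ≥ p for every k : ℕ and every s : S with g k s ≥ p. -/
import Mathlib


open Finset
open scoped Classical

/-- The feasible set of transition-probability vectors at state `s` under action `a`. -/
def Feas {S A : Type*} [Fintype S] (Δmin Δmax : S → A → S → ℝ) (s : S) (a : A) :
    Set (S → ℝ) :=
  {x | (∀ s', Δmin s a s' ≤ x s' ∧ x s' ≤ Δmax s a s') ∧ ∑ s', x s' = 1}

/-- Worst-case one-step value of `h` over the feasible set. -/
noncomputable def kappaOf {S A : Type*} [Fintype S] (Δmin Δmax : S → A → S → ℝ)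
    (h : S → ℝ) (s : S) (a : A) : ℝ :=
  sInf ((fun x : S → ℝ => ∑ s', h s' * x s') '' Feas Δmin Δmax s a)

/-- The worst-case satisfaction lower bound `g`, indexed by remaining time. -/
noncomputable def gval {S A : Type*} [Fintype S] [Fintype A] [Nonempty A]
    (Δmin Δmax : S → A → S → ℝ) (F : Finset S) : ℕ → S → ℝ
  | 0 => fun s => if s ∈ F then 1 else 0
  | (k+1) => fun s =>
      Finset.univ.sup' Finset.univ_nonempty
        (fun a : A => kappaOf Δmin Δmax (gval Δmin Δmax F k) s a)

/-- `κ k s a`: worst-case optimization value at remaining time `k`. -/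
noncomputable def kappa {S A : Type*} [Fintype S] [Fintype A] [Nonempty A]
    (Δmin Δmax : S → A → S → ℝ) (F : Finset S) (k : ℕ) (s : S) (a : A) : ℝ :=
  kappaOf Δmin Δmax (gval Δmin Δmax F k) s a

/-- A transition kernel is admissible if it lies in the feasible set everywhere. -/
def Admissible {S A : Type*} [Fintype S] (Δmin Δmax Δ : S → A → S → ℝ) : Prop :=
  ∀ s a, Δ s a ∈ Feas Δmin Δmax s a

/-- Success probability of reaching `F` within the remaining time under policy `π`. -/
noncomputable def vpi {S A : Type*} [Fintype S] (Δ : S → A → S → ℝ) (F : Finset S)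
    (π : ℕ → S → A) : ℕ → S → ℝ
  | 0 => fun s => if s ∈ F then 1 else 0
  | (k+1) => fun s => ∑ s', Δ s (π (k+1) s) s' * vpi Δ F π k s'

/-- A policy is κ-greedy if its action attains the max in the recursion for `g`. -/
def Greedy {S A : Type*} [Fintype S] [Fintype A] [Nonempty A]
    (Δmin Δmax : S → A → S → ℝ) (F : Finset S) (π : ℕ → S → A) : Prop :=
  ∀ k s, kappa Δmin Δmax F k s (π (k+1) s) = gval Δmin Δmax F (k+1) s

/-- `Act Δmin Δmax F p k s` is the pruned action set at remaining time `k+1`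
(written `Act (k+1) s` in the paper): actions whose every possibly-reached
successor `s'` (i.e. `Δmax s a s' > 0`) satisfies `g k s' ≥ p`. -/
def Act {S A : Type*} [Fintype S] [Fintype A] [Nonempty A]
    (Δmin Δmax : S → A → S → ℝ) (F : Finset S) (p : ℝ) (k : ℕ) (s : S) : Set A :=
  {a | ∀ s', 0 < Δmax s a s' → p ≤ gval Δmin Δmax F k s'}


lemma gval_nonneg' {S A : Type*} [Fintype S] [Fintype A] [Nonempty S] [Nonempty A]
    (Δmin Δmax : S → A → S → ℝ)
    (hbounds : ∀ s a s', 0 ≤ Δmin s a s' ∧ Δmin s a s' ≤ Δmax s a s')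
    (F : Finset S) : ∀ k s, 0 ≤ gval Δmin Δmax F k s := by
  intro k
  induction k with
  | zero => intro s; simp [gval]; positivity
  | succ k ih =>
    intro s
    refine le_trans ?_ (Finset.le_sup' _ (Finset.mem_univ (Classical.arbitrary A)))
    apply Real.sInf_nonneg
    rintro y ⟨x, ⟨hx, -⟩, rfl⟩
    apply Finset.sum_nonneg
    intro s' _
    exact mul_nonneg (ih s') (le_trans (hbounds _ _ _).1 (hx s').1)

lemma gval_le_vpi {S A : Type*} [Fintype S] [Fintype A] [Nonempty S] [Nonempty A]
    (Δmin Δmax : S → A → S → ℝ)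
    (hbounds : ∀ s a s', 0 ≤ Δmin s a s' ∧ Δmin s a s' ≤ Δmax s a s')
    (F : Finset S)
    (Δ : S → A → S → ℝ) (hΔ : Admissible Δmin Δmax Δ)
    (π : ℕ → S → A) (hπ : Greedy Δmin Δmax F π) :
    ∀ k s, gval Δmin Δmax F k s ≤ vpi Δ F π k s := by
  intro k
  induction k with
  | zero => intro s; simp [gval, vpi]
  | succ k ih =>
    intro s
    have hg := hπ k s
    rw [← hg]
    have hΔa := hΔ s (π (k+1) s)
    have hΔnn : ∀ s', 0 ≤ Δ s (π (k+1) s) s' := fun s' =>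
      le_trans (hbounds _ _ _).1 (hΔa.1 s').1
    have h1 : kappa Δmin Δmax F k s (π (k+1) s) ≤
        ∑ s', gval Δmin Δmax F k s' * Δ s (π (k+1) s) s' := by
      apply csInf_le
      · refine ⟨0, ?_⟩
        rintro y ⟨x, ⟨hx, -⟩, rfl⟩
        apply Finset.sum_nonneg
        intro s' _
        exact mul_nonneg (gval_nonneg' Δmin Δmax hbounds F k s')
          (le_trans (hbounds _ _ _).1 (hx s').1)
      · exact ⟨Δ s (π (k+1) s), hΔa, rfl⟩
    refine h1.trans ?_
    rw [show vpi Δ F π (k+1) s = ∑ s', Δ s (π (k+1) s) s' * vpi Δ F π k s' from rfl]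
    apply Finset.sum_le_sum
    intro s' _
    rw [mul_comm]
    exact mul_le_mul_of_nonneg_left (ih s') (hΔnn s')

/-- Theorem 1, Case (c): under an admissible kernel, a κ-greedy
policy reaches the accepting set with probability at least `p` from any state
whose worst-case value is at least `p`. -/
theorem greedy_policy_prob_ge {S A : Type*} [Fintype S] [Fintype A]
    [Nonempty S] [Nonempty A]
    (Δmin Δmax : S → A → S → ℝ)
    (hbounds : ∀ s a s', 0 ≤ Δmin s a s' ∧ Δmin s a s' ≤ Δmax s a s')
    (F : Finset S) (p : ℝ) (hp : 0 < p) (hp1 : p ≤ 1)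
    (Δ : S → A → S → ℝ) (hΔ : Admissible Δmin Δmax Δ)
    (π : ℕ → S → A) (hπ : Greedy Δmin Δmax F π) :
    ∀ (k : ℕ) (s : S), p ≤ gval Δmin Δmax F k s → p ≤ vpi Δ F π k s := by
  intro k s hgs
  exact hgs.trans (gval_le_vpi Δmin Δmax hbounds F Δ hΔ π hπ k s)
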